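/- arXiv:2202.04278 — 2 statements merged into one kernel-verified Lean document; each statement's English description precedes it below -/
import Mathlib

section
/- ∀∀ soundness for relational models, part (b): for any set Σ, relations c, d, R, S on Σ, and any relation B on Σ×Σ, if Ṙ ; ⟨c|d⟩ ⊆ Ṙ ; B and the relation Ṙ ; B ; (¬S)̇ is empty, then the semantic ∀∀ judgment holds: for all σ,σ',τ,τ', if R σ σ', c σ τ and d σ' τ' then S τ τ'. -/
namespace BiKAT

variable {S : Type*}

/-- Relational composition: (A ; B) x z iff ∃ y, A x y ∧ B y z. -/
def rcomp {α : Type*} (A B : α → α → Prop) : α → α → Prop :=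
  fun x z => ∃ y, A x y ∧ B y z

/-- Union of relations. -/
def runion {α : Type*} (A B : α → α → Prop) : α → α → Prop :=
  fun x z => A x z ∨ B x z

/-- Reflexive-transitive closure. -/
def rstar {α : Type*} (A : α → α → Prop) : α → α → Prop :=
  Relation.ReflTransGen A

/-- Inclusion of relations, pointwise implication. -/
def rincl {α : Type*} (A B : α → α → Prop) : Prop := ∀ x y, A x y → B x y

/-- Test: sub-identity relation of a set. -/
def test (e : Set S) : S → S → Prop := fun x y => x ∈ e ∧ y = x

/-- Left embedding ⟨c]. -/
def lemb (c : S → S → Prop) : S × S → S × S → Prop :=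
  fun p q => c p.1 q.1 ∧ p.2 = q.2

/-- Right embedding [c⟩. -/
def remb (c : S → S → Prop) : S × S → S × S → Prop :=
  fun p q => c p.2 q.2 ∧ p.1 = q.1

/-- Two-argument embedding ⟨c|d⟩ := ⟨c] ; [d⟩. -/
def emb2 (c d : S → S → Prop) : S × S → S × S → Prop :=
  rcomp (lemb c) (remb d)

/-- Bitest Ṙ: sub-identity relation on Σ×Σ for a relation R on Σ. -/
def bitest (R : S → S → Prop) : S × S → S × S → Prop :=
  fun p q => R p.1 p.2 ∧ q.1 = p.1 ∧ q.2 = p.2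

/-- Havoc: the full relation. -/
def hav : S → S → Prop := fun _ _ => True

/-- while e do c := ([e];c)* ; [¬e]. -/
def wh (e : Set S) (c : S → S → Prop) : S → S → Prop :=
  rcomp (rstar (rcomp (test e) c)) (test eᶜ)

/-- The ∀∀ judgment c | d : R ≈> Sp. -/
def allall (c d R Sp : S → S → Prop) : Prop :=
  ∀ σ σ' τ τ', R σ σ' → c σ τ → d σ' τ' → Sp τ τ'

/-- Forward simulation judgment c | d : R ⇒∃ Sp. -/
def fsim (c d R Sp : S → S → Prop) : Prop :=
  ∀ σ σ' τ, R σ σ' → c σ τ → ∃ τ', d σ' τ' ∧ Sp τ τ'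

/-- Backward simulation judgment c | d : R ⇐∃ Sp. -/
def bsim (c d R Sp : S → S → Prop) : Prop :=
  ∀ σ τ τ', c σ τ → Sp τ τ' → ∃ σ', R σ σ' ∧ d σ' τ'

/-- Triple (componentwise) embedding ⟪a|b|c⟫ on Σ×Σ×Σ. -/
def tri (a b c : S → S → Prop) : S × S × S → S × S × S → Prop :=
  fun p q => a p.1 q.1 ∧ b p.2.1 q.2.1 ∧ c p.2.2 q.2.2

/-- ⟦A ∥ B⟧: pairs of BiKAT elements agreeing on the middle execution. -/
def tpair (A B : S × S → S × S → Prop) : S × S × S → S × S × S → Prop :=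
  fun p q => A (p.1, p.2.1) (q.1, q.2.1) ∧ B (p.2.1, p.2.2) (q.2.1, q.2.2)

/-- ⇙X: projection to the left two of three. -/
def proj2 (X : S × S × S → S × S × S → Prop) : S × S → S × S → Prop :=
  fun p q => ∃ s t, X (p.1, p.2, s) (q.1, q.2, t)

end BiKAT

open BiKAT

namespace BiKAT

variable {S : Type*}

theorem rcomp_bitest_emb2_iff {c d R : S → S → Prop} {σ σ' τ τ' : S} :
    rcomp (bitest R) (emb2 c d) (σ, σ') (τ, τ') ↔ R σ σ' ∧ c σ τ ∧ d σ' τ' := by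
  constructor
  · rintro ⟨⟨_, _⟩, ⟨hR, rfl, rfl⟩, ⟨_, _⟩, ⟨hc, rfl⟩, hd, rfl⟩
    exact ⟨hR, hc, hd⟩
  · rintro ⟨hR, hc, hd⟩
    exact ⟨(σ, σ'), ⟨hR, rfl, rfl⟩, (τ, σ'), ⟨hc, rfl⟩, hd, rfl⟩

theorem rcomp_bitest_right_iff {A : S × S → S × S → Prop} {T : S → S → Prop} {p q : S × S} :
    rcomp A (bitest T) p q ↔ A p q ∧ T q.1 q.2 := by
  constructor
  · rintro ⟨⟨_, _⟩, hA, hT, rfl, rfl⟩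
    exact ⟨hA, hT⟩
  · rintro ⟨hA, hT⟩
    exact ⟨q, hA, hT, rfl, rfl⟩

end BiKAT

/-- ∀∀ soundness for relational models, part (b). -/
theorem stmt3 (S : Type*) (c d R Sp : S → S → Prop) (B : S × S → S × S → Prop)
    (h1 : rincl (rcomp (bitest R) (emb2 c d)) (rcomp (bitest R) B))
    (h2 : ∀ p q : S × S,
      ¬ rcomp (rcomp (bitest R) B) (bitest (fun a b => ¬ Sp a b)) p q) :
    allall c d R Sp := by
  intro σ σ' τ τ' hR hc hd
  by_contra hS
  have hB := h1 _ _ (rcomp_bitest_emb2_iff.2 ⟨hR, hc, hd⟩)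
  exact h2 _ _ (rcomp_bitest_right_iff.2 ⟨hB, hS⟩)
end

section
/- Lockstep expansion law in the relational model: for any set Σ, relations c, c' on Σ and subsets e, e' of Σ, the following equality of relations on Σ×Σ holds: ⟨([e];c)* ; [¬e] | ([e'];c')* ; [¬e']⟩ = (⟨[e];c | [e'];c'⟩)* ; ((⟨[e];c | [¬e']⟩)* + (⟨[¬e] | [e'];c'⟩)*) ; ⟨[¬e] | [¬e']⟩, where + is union of relations. -/
open BiKAT

/-!
Run both loops in lockstep until one of them has left its loop; the other then finishes alone
while the stopped side idles on its exit test. Conversely, a lockstep run followed by one-sided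
steps projects to a run of each loop. Only the exit tests matter, so the law holds for
arbitrary loop bodies.
-/

namespace BiKAT

variable {S : Type*}

theorem emb2_iff {A B : S → S → Prop} {p q : S × S} :
    emb2 A B p q ↔ A p.1 q.1 ∧ B p.2 q.2 := by
  constructor
  · rintro ⟨m, ⟨hA, hm₂⟩, hB, hm₁⟩
    exact ⟨hm₁ ▸ hA, hm₂ ▸ hB⟩
  · rintro ⟨hA, hB⟩
    exact ⟨(q.1, p.2), ⟨hA, rfl⟩, hB, rfl⟩

theorem reflTransGen_emb2 {A B : S → S → Prop} {p q : S × S}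
    (h : Relation.ReflTransGen (emb2 A B) p q) :
    Relation.ReflTransGen A p.1 q.1 ∧ Relation.ReflTransGen B p.2 q.2 :=
  ⟨h.lift Prod.fst fun _ _ h => (emb2_iff.1 h).1, h.lift Prod.snd fun _ _ h => (emb2_iff.1 h).2⟩

theorem eq_of_reflTransGen_test {f : Set S} {x y : S} (h : Relation.ReflTransGen (test f) x y) :
    y = x := by
  induction h with
  | refl => rfl
  | tail _ hstep ih => exact hstep.2.trans ih

theorem exists_reflTransGen_emb2_then_one_sided {A B P Q : S → S → Prop} {σ σ' τ τ' : S}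
    (hA : Relation.ReflTransGen A σ τ) (hB : Relation.ReflTransGen B σ' τ')
    (hP : P τ τ) (hQ : Q τ' τ') :
    ∃ μ, Relation.ReflTransGen (emb2 A B) (σ, σ') μ ∧
      (Relation.ReflTransGen (emb2 A Q) μ (τ, τ') ∨
        Relation.ReflTransGen (emb2 P B) μ (τ, τ')) := by
  induction hA using Relation.ReflTransGen.head_induction_on generalizing σ' with
  | refl => exact ⟨(τ, σ'), .refl, .inr (hB.lift (τ, ·) fun _ _ h => emb2_iff.2 ⟨hP, h⟩)⟩
  | @head a b hab hbτ ih =>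
    rcases hB.cases_head with rfl | ⟨y, hσ'y, hyτ'⟩
    · exact ⟨(a, σ'), .refl, .inl ((hbτ.head hab).lift (·, σ') fun _ _ h => emb2_iff.2 ⟨h, hQ⟩)⟩
    · obtain ⟨μ, hμ, hμτ⟩ := ih hyτ'
      exact ⟨μ, hμ.head (emb2_iff.2 ⟨hab, hσ'y⟩), hμτ⟩

theorem emb2_rstar_comp_test (A B : S → S → Prop) (f f' : Set S) :
    emb2 (rcomp (rstar A) (test f)) (rcomp (rstar B) (test f')) =
      rcomp
        (rcomp (rstar (emb2 A B))
          (runion (rstar (emb2 A (test f'))) (rstar (emb2 (test f) B))))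
        (emb2 (test f) (test f')) := by
  funext ⟨σ, σ'⟩ ⟨ρ, ρ'⟩
  apply propext
  constructor
  · rw [emb2_iff]
    rintro ⟨⟨ρ, hA, hρ, rfl⟩, ρ', hB, hρ', rfl⟩
    obtain ⟨μ, hμ, hμρ⟩ := exists_reflTransGen_emb2_then_one_sided (P := test f) (Q := test f')
      hA hB ⟨hρ, rfl⟩ ⟨hρ', rfl⟩
    exact ⟨(ρ, ρ'), ⟨μ, hμ, hμρ⟩, emb2_iff.2 ⟨⟨hρ, rfl⟩, hρ', rfl⟩⟩
  · rintro ⟨ν, ⟨μ, hμ, hμν⟩, hν⟩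
    obtain ⟨hA, hB⟩ := reflTransGen_emb2 hμ
    obtain ⟨hνf, hνf'⟩ := emb2_iff.1 hν
    refine emb2_iff.2 ?_
    rcases hμν with hμν | hμν
    · obtain ⟨hA', hB'⟩ := reflTransGen_emb2 hμν
      rw [← eq_of_reflTransGen_test hB'] at hB
      exact ⟨⟨ν.1, hA.trans hA', hνf⟩, ν.2, hB, hνf'⟩
    · obtain ⟨hA', hB'⟩ := reflTransGen_emb2 hμν
      rw [← eq_of_reflTransGen_test hA'] at hA
      exact ⟨⟨ν.1, hA, hνf⟩, ν.2, hB.trans hB', hνf'⟩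

end BiKAT

/-- Lockstep expansion law in the relational model. -/
theorem stmt5 (S : Type*) (c c' : S → S → Prop) (e e' : Set S) :
    emb2 (wh e c) (wh e' c') =
      rcomp
        (rcomp (rstar (emb2 (rcomp (test e) c) (rcomp (test e') c')))
          (runion (rstar (emb2 (rcomp (test e) c) (test e'ᶜ)))
                  (rstar (emb2 (test eᶜ) (rcomp (test e') c')))))
        (emb2 (test eᶜ) (test e'ᶜ)) :=
  emb2_rstar_comp_test _ _ _ _
end
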